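/- In a strongly compact closed category with biproducts such that the injections satisfy q_j† ∘ q_i = δ_{ij}, the projections and injections satisfy p_i† = q_i. -/
import Mathlib

open CategoryTheory CategoryTheory.Limits CategoryTheory.MonoidalCategory

/-- In a strongly compact closed category with biproducts (a compact closed category equipped
with an adjoint operation `f ↦ f†`, i.e. a contravariant involutive identity-on-objects functor,
arising from the covariant involution as `f† = (f_*)*`), if the injections satisfy
`q_j† ∘ q_i = δ_{ij}`, then the projections and injections satisfy `p_i† = q_i`. -/
theorem dagger_proj_eq_inj {C : Type*} [Category C] [MonoidalCategory C]
    [SymmetricCategory C] [LeftRigidCategory C] [Preadditive C] [HasBinaryBiproducts C]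
    (dag : ∀ {X Y : C}, (X ⟶ Y) → (Y ⟶ X))
    (dag_id : ∀ X : C, dag (𝟙 X) = 𝟙 X)
    (dag_comp : ∀ {X Y Z : C} (f : X ⟶ Y) (g : Y ⟶ Z), dag (f ≫ g) = dag g ≫ dag f)
    (dag_dag : ∀ {X Y : C} (f : X ⟶ Y), dag (dag f) = f)
    (A B : C)
    (h₁₁ : (biprod.inl : A ⟶ A ⊞ B) ≫ dag (biprod.inl : A ⟶ A ⊞ B) = 𝟙 A)
    (h₁₂ : (biprod.inl : A ⟶ A ⊞ B) ≫ dag (biprod.inr : B ⟶ A ⊞ B) = 0)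
    (h₂₁ : (biprod.inr : B ⟶ A ⊞ B) ≫ dag (biprod.inl : A ⟶ A ⊞ B) = 0)
    (h₂₂ : (biprod.inr : B ⟶ A ⊞ B) ≫ dag (biprod.inr : B ⟶ A ⊞ B) = 𝟙 B) :
    dag (biprod.fst : A ⊞ B ⟶ A) = biprod.inl ∧
    dag (biprod.snd : A ⊞ B ⟶ B) = biprod.inr := by
  have e1 : dag (biprod.inl : A ⟶ A ⊞ B) = biprod.fst := by
    apply biprod.hom_ext' <;> simp [h₁₁, h₂₁]
  have e2 : dag (biprod.inr : B ⟶ A ⊞ B) = biprod.snd := by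
    apply biprod.hom_ext' <;> simp [h₁₂, h₂₂]
  constructor
  · rw [← e1, dag_dag]
  · rw [← e2, dag_dag]
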